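/- Let f : ℝ² → ℝ² be a homeomorphism admitting a Lyapunov metric function U. If x, y ∈ ℝ² and there exists K > 0 such that U(fⁿ(x),fⁿ(y)) ≤ K for all n ∈ ℤ, then x = y. Consequently a stable curve and an unstable curve of f intersect each other at most once: for every K > 0, the intersection of the K-stable set and the K-unstable set of any point x equals {x}. -/

import Mathlib

/-- First difference of `U` along the dynamics of `f`:
`V(x,y) = U(f(x),f(y)) − U(x,y)`. -/
def Vd (f : Equiv.Perm (ℝ × ℝ)) (U : ℝ × ℝ → ℝ × ℝ → ℝ) (x y : ℝ × ℝ) : ℝ :=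
  U (f x) (f y) - U x y

/-- Second difference of `U` along the dynamics of `f`:
`W(x,y) = U(f²(x),f²(y)) − 2·U(f(x),f(y)) + U(x,y)`. -/
def Wd (f : Equiv.Perm (ℝ × ℝ)) (U : ℝ × ℝ → ℝ × ℝ → ℝ) (x y : ℝ × ℝ) : ℝ :=
  U (f (f x)) (f (f y)) - 2 * U (f x) (f y) + U x y

/-- `U` is a Lyapunov metric function for `f`: a continuous metric on the plane
inducing the same topology as the Euclidean one, whose second difference along
`f` is strictly positive off the diagonal. -/
def IsLyapunovMetric (f : Equiv.Perm (ℝ × ℝ)) (U : ℝ × ℝ → ℝ × ℝ → ℝ) : Prop :=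
  Continuous (fun z : (ℝ × ℝ) × (ℝ × ℝ) => U z.1 z.2) ∧
  (∀ x y, 0 ≤ U x y) ∧ (∀ x y, U x y = U y x) ∧
  (∀ x y, U x y = 0 ↔ x = y) ∧
  (∀ x y z, U x z ≤ U x y + U y z) ∧
  (∀ x : ℝ × ℝ, ∀ ε > (0:ℝ), ∃ δ > (0:ℝ), ∀ y, dist x y < δ → U x y < ε) ∧
  (∀ x : ℝ × ℝ, ∀ ε > (0:ℝ), ∃ δ > (0:ℝ), ∀ y, U x y < δ → dist x y < ε) ∧
  (∀ x y : ℝ × ℝ, x ≠ y → 0 < Wd f U x y)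

/-- `B_k(x)`: the connected component containing `x` of `{w : U(x,w) ≤ k}`. -/
def Bk (U : ℝ × ℝ → ℝ × ℝ → ℝ) (k : ℝ) (x : ℝ × ℝ) : Set (ℝ × ℝ) :=
  connectedComponentIn {w : ℝ × ℝ | U x w ≤ k} x

/-- The both-signs condition: on the boundary of every `B_k(x)` the first
difference takes both a positive and a negative value. -/
def BothSigns (f : Equiv.Perm (ℝ × ℝ)) (U : ℝ × ℝ → ℝ × ℝ → ℝ) : Prop :=
  ∀ x : ℝ × ℝ, ∀ k > (0:ℝ),
    (∃ y ∈ frontier (Bk U k x), 0 < Vd f U x y) ∧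
    (∃ z ∈ frontier (Bk U k x), Vd f U x z < 0)

/-- The `K`-stable set of `x`. -/
def Sk (f : Equiv.Perm (ℝ × ℝ)) (U : ℝ × ℝ → ℝ × ℝ → ℝ) (K : ℝ)
    (x : ℝ × ℝ) : Set (ℝ × ℝ) :=
  {y | ∀ n : ℤ, 0 ≤ n → U ((f ^ n) x) ((f ^ n) y) ≤ K}

/-- The `K`-unstable set of `x`. -/
def Uk (f : Equiv.Perm (ℝ × ℝ)) (U : ℝ × ℝ → ℝ × ℝ → ℝ) (K : ℝ)
    (x : ℝ × ℝ) : Set (ℝ × ℝ) :=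
  {y | ∀ n : ℤ, n ≤ 0 → U ((f ^ n) x) ((f ^ n) y) ≤ K}

/-!
Along a pair of orbits the distances `aₙ = U(fⁿx, fⁿy)` form a strictly convex sequence on `ℤ`
when `x ≠ y`, because the second difference `aₙ₊₂ − 2aₙ₊₁ + aₙ` is `W(fⁿx, fⁿy) > 0`. Its
increments are strictly increasing, so one of them is positive (and then `aₙ → ∞` as `n → ∞`)
or one is negative (and then `aₙ → ∞` as `n → −∞`). Either way the full orbit is unbounded.
-/

def orbitDist (f : Equiv.Perm (ℝ × ℝ)) (U : ℝ × ℝ → ℝ × ℝ → ℝ) (x y : ℝ × ℝ) (n : ℤ) : ℝ :=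
  U ((f ^ n) x) ((f ^ n) y)

section IntSequence

variable {α : Type*} [CommRing α] [LinearOrder α] [IsStrictOrderedRing α]

lemma Int.add_mul_le_of_le_sub {a : ℤ → α} {m : ℤ} {d : α}
    (h : ∀ n, m ≤ n → d ≤ a (n + 1) - a n) (N : ℕ) : a m + N * d ≤ a (m + N) := by
  induction N with
  | zero => simp
  | succ N ih =>
    have hstep := h (m + N) (by omega)
    push_cast
    rw [← add_assoc]
    linarith

lemma Int.not_bddAbove_range_of_le_sub [Archimedean α] {a : ℤ → α} {m : ℤ} {d : α} (hd : 0 < d)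
    (h : ∀ n, m ≤ n → d ≤ a (n + 1) - a n) : ¬ BddAbove (Set.range a) := by
  rintro ⟨K, hK⟩
  obtain ⟨N, hN⟩ := exists_lt_nsmul hd (K - a m)
  have hgrowth := Int.add_mul_le_of_le_sub h N
  have hbound : a (m + N) ≤ K := hK ⟨m + N, rfl⟩
  rw [nsmul_eq_mul] at hN
  linarith

lemma Int.not_bddAbove_range_of_strictMono_sub [Archimedean α] {a : ℤ → α}
    (h : StrictMono fun n => a (n + 1) - a n) : ¬ BddAbove (Set.range a) := by
  rcases lt_or_ge 0 (a (1 + 1) - a 1) with hpos | hnonpos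
  · exact Int.not_bddAbove_range_of_le_sub hpos fun n hn => h.monotone hn
  · have hincr : a (0 + 1) - a 0 < a (1 + 1) - a 1 := h one_pos
    rw [zero_add] at hincr
    have hneg : 0 < -(a 1 - a 0) := by linarith
    have hreflected : ¬ BddAbove (Set.range fun n => a (-n)) :=
      Int.not_bddAbove_range_of_le_sub (m := 0) hneg fun n hn => by
        have := h.monotone (show -n - 1 ≤ 0 by omega)
        simp only [show -n - 1 + 1 = -n by ring, zero_add] at this
        rw [show -(n + 1) = -n - 1 by ring]
        linarith
    exact fun hbdd => hreflected (hbdd.mono (Set.range_comp_subset_range _ a))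

end IntSequence

lemma IsLyapunovMetric.strictMono_orbitDist_sub {f : Equiv.Perm (ℝ × ℝ)}
    {U : ℝ × ℝ → ℝ × ℝ → ℝ} (hU : IsLyapunovMetric f U) {x y : ℝ × ℝ} (hxy : x ≠ y) :
    StrictMono fun n => orbitDist f U x y (n + 1) - orbitDist f U x y n := by
  refine strictMono_int_of_lt_succ fun n => ?_
  have hW := hU.2.2.2.2.2.2.2 ((f ^ n) x) ((f ^ n) y) ((f ^ n).injective.ne hxy)
  have hiter : ∀ (k : ℤ) z, f ((f ^ k) z) = (f ^ (k + 1)) z := fun k z => by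
    rw [add_comm, zpow_one_add, Equiv.Perm.mul_apply]
  simp only [Wd, hiter] at hW
  simp only [orbitDist]
  linarith

theorem bounded_full_orbit_implies_equal_general
    (f : Equiv.Perm (ℝ × ℝ))
    (U : ℝ × ℝ → ℝ × ℝ → ℝ) (hU : IsLyapunovMetric f U) :
    (∀ x y : ℝ × ℝ,
      (∃ K > (0:ℝ), ∀ n : ℤ, U ((f ^ n) x) ((f ^ n) y) ≤ K) → x = y) ∧
    (∀ K > (0:ℝ), ∀ x : ℝ × ℝ, Sk f U K x ∩ Uk f U K x = {x}) := by
  have hbounded : ∀ x y : ℝ × ℝ,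
      (∃ K > (0:ℝ), ∀ n : ℤ, U ((f ^ n) x) ((f ^ n) y) ≤ K) → x = y := by
    rintro x y ⟨K, -, hK⟩
    by_contra hxy
    exact Int.not_bddAbove_range_of_strictMono_sub (hU.strictMono_orbitDist_sub hxy)
      ⟨K, Set.forall_mem_range.2 hK⟩
  refine ⟨hbounded, fun K hK x => ?_⟩
  ext y
  constructor
  · rintro ⟨hs, hu⟩
    exact (hbounded x y ⟨K, hK, fun n => (le_total 0 n).elim (hs n) (hu n)⟩).symm
  · rintro rfl
    have hself : ∀ n : ℤ, U ((f ^ n) y) ((f ^ n) y) ≤ K := fun n => by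
      rw [(hU.2.2.2.1 _ _).2 rfl]
      exact hK.le
    exact ⟨fun n _ => hself n, fun n _ => hself n⟩

/-- a full orbit bounded in the Lyapunov metric forces the two
points to coincide; hence stable and unstable sets meet at most once. -/
theorem bounded_full_orbit_implies_equal
    (f : Equiv.Perm (ℝ × ℝ)) (hf : Continuous f) (hf' : Continuous f.symm)
    (U : ℝ × ℝ → ℝ × ℝ → ℝ) (hU : IsLyapunovMetric f U) :
    (∀ x y : ℝ × ℝ,
      (∃ K > (0:ℝ), ∀ n : ℤ, U ((f ^ n) x) ((f ^ n) y) ≤ K) → x = y) ∧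
    (∀ K > (0:ℝ), ∀ x : ℝ × ℝ, Sk f U K x ∩ Uk f U K x = {x}) :=
  bounded_full_orbit_implies_equal_general f U hU
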